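/- Fix $\varepsilon \in (0, 1/2]$ and $d \ge 1$, and set $T = (1/(8\varepsilon))^d$ (assumed to be a positive integer with $1/(8\varepsilon)$ a positive integer). For each integer $t$ with $1 \le t \le T$, let $k_1(t), \ldots, k_d(t) \in \{0, 1, \ldots, 1/(8\varepsilon) - 1\}$ denote the digits of $t - 1$ in base $1/(8\varepsilon)$, and define $\mu_t = (1/4 + 2\varepsilon + 4\varepsilon k_1(t), \ldots, 1/4 + 2\varepsilon + 4\varepsilon k_d(t)) \in \mathbb{R}^d$. Then for all $1 \le t' < t \le T$, it is not the case that $\mu_{t'} \ge \mu_t - \varepsilon \mathbf{1}$ componentwise. -/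
import Mathlib

lemma sum_digits_eq (K : ℕ) (hK : 1 ≤ K) :
    ∀ d n : ℕ, n < K ^ d → n = ∑ j ∈ Finset.range d, (n / K ^ j % K) * K ^ j := by
  intro d
  induction d with
  | zero => intro n hn; simpa using Nat.lt_one_iff.mp (by simpa using hn)
  | succ d ih =>
    intro n hn
    rw [Finset.sum_range_succ']
    simp only [pow_zero, Nat.div_one, mul_one]
    have h1 : ∀ j : ℕ, n / K ^ (j + 1) % K * K ^ (j + 1) =
        ((n / K) / K ^ j % K * K ^ j) * K := by
      intro j
      rw [pow_succ]
      rw [Nat.div_div_eq_div_mul]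
      ring
    simp only [h1]
    rw [← Finset.sum_mul]
    have hdiv : n / K < K ^ d := by
      rw [Nat.div_lt_iff_lt_mul (by omega)]
      calc n < K ^ (d + 1) := hn
        _ = K ^ d * K := by ring
    rw [← ih (n / K) hdiv]
    rw [Nat.mul_comm (n / K) K]; exact (Nat.div_add_mod n K).symm

lemma exists_digit_lt (K d a b : ℕ) (hK : 1 ≤ K) (hab : a < b) (hb : b < K ^ d) :
    ∃ j < d, a / K ^ j % K < b / K ^ j % K := by
  by_contra h
  push_neg at h
  have ha : a < K ^ d := lt_trans hab hb
  have hA := sum_digits_eq K hK d a ha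
  have hB := sum_digits_eq K hK d b hb
  have : b ≤ a := by
    rw [hA, hB]
    apply Finset.sum_le_sum
    intro j hj
    exact Nat.mul_le_mul_right _ (h j (Finset.mem_range.mp hj))
  omega

/-- In the lower-bound construction, for `t' < t` the distinguished weight vector of
group `t'` does not ε-dominate that of group `t`. -/
theorem no_eps_domination (d K : ℕ) (hd : 1 ≤ d) (hK : 1 ≤ K)
    (ε : ℝ) (hε : ε = 1 / (8 * K))
    (μ : ℕ → Fin d → ℝ)
    (hμ : ∀ t, ∀ j : Fin d,
      μ t j = 1/4 + 2*ε + 4*ε * ((((t - 1) / K ^ (j : ℕ)) % K : ℕ) : ℝ)) :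
    ∀ t' t : ℕ, 1 ≤ t' → t' < t → t ≤ K ^ d →
      ¬ ∀ j : Fin d, μ t j - ε ≤ μ t' j := by
  intro t' t ht'1 htt' htT h
  have hεpos : 0 < ε := by
    rw [hε]; positivity
  have hab : t' - 1 < t - 1 := by omega
  have hb : t - 1 < K ^ d := by
    have : 1 ≤ K ^ d := Nat.one_le_pow _ _ (by omega)
    omega
  obtain ⟨j, hjd, hdig⟩ := exists_digit_lt K d (t' - 1) (t - 1) hK hab hb
  have hj := h ⟨j, hjd⟩
  rw [hμ, hμ] at hj
  simp only at hj
  set ka := (t' - 1) / K ^ j % K with hka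
  set kb := (t - 1) / K ^ j % K with hkb
  have hcast : (ka : ℝ) + 1 ≤ (kb : ℝ) := by exact_mod_cast hdig
  nlinarith [hεpos, hcast]
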